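/- For any d ≥ 3, the pseudo-Boolean function f : P([d]) → ℝ, f(α) := max(|α|, 1), is fully 2-increasing but not fully 3-increasing. -/

import Mathlib

open Finset

/-- Discrete difference `(Δ_β f)(γ) = Σ_{β' ⊆ β} (−1)^{|β|−|β'|} f(γ ∪ β')` of a
pseudo-Boolean function. -/
def pbDiff {d : ℕ} (f : Finset (Fin d) → ℝ) (β γ : Finset (Fin d)) : ℝ :=
  ∑ β' ∈ β.powerset, (-1 : ℝ) ^ (β.card - β'.card) * f (γ ∪ β')

/-- A pseudo-Boolean function is fully `k`-increasing. -/
def PBFullyInc {d : ℕ} (k : ℕ) (f : Finset (Fin d) → ℝ) : Prop :=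
  ∀ β : Finset (Fin d), 1 ≤ β.card → β.card ≤ k →
    ∀ γ : Finset (Fin d), Disjoint γ β → 0 ≤ pbDiff f β γ

/-!
When `f α = g |α|`, the difference `(Δ_β f)(γ)` is the `|β|`-th forward difference of `g` at `|γ|`.
For `g n = max n 1` the first differences are `≥ 0` (monotone) and the second ones are `≥ 0`
(convex), while the third difference at `0` is `3 - 3·2 + 3·1 - 1 = -1`.
-/

lemma pbDiff_comp_card {d : ℕ} (g : ℕ → ℝ) {β γ : Finset (Fin d)} (h : Disjoint γ β) :
    pbDiff (fun α => g #α) β γ =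
      ∑ j ∈ range (#β + 1), (-1 : ℝ) ^ (#β - j) * ((#β).choose j) * g (#γ + j) := by
  rw [pbDiff, sum_powerset]
  refine sum_congr rfl fun j _ => ?_
  have hterm : ∀ t ∈ β.powersetCard j,
      (-1 : ℝ) ^ (#β - #t) * g #(γ ∪ t) = (-1 : ℝ) ^ (#β - j) * g (#γ + j) := by
    intro t ht
    rw [mem_powersetCard] at ht
    rw [card_union_of_disjoint (h.mono_right ht.1), ht.2]
  rw [sum_congr rfl hterm, sum_const, card_powersetCard, nsmul_eq_mul]
  ring

lemma pbFullyInc_two_comp_card {d : ℕ} {g : ℕ → ℝ} (hmono : Monotone g)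
    (hconv : ∀ n, 2 * g (n + 1) ≤ g n + g (n + 2)) :
    PBFullyInc 2 (fun α : Finset (Fin d) => g #α) := by
  intro β hβ₁ hβ₂ γ hγβ
  rw [pbDiff_comp_card g hγβ]
  obtain hβ | hβ : #β = 1 ∨ #β = 2 := by omega
  · simp [hβ, sum_range_succ]
    linarith [hmono (Nat.le_succ #γ)]
  · simp [hβ, sum_range_succ]
    linarith [hconv #γ]

lemma not_pbFullyInc_three_comp_card {d : ℕ} (hd : 3 ≤ d) {g : ℕ → ℝ}
    (h : g 3 - 3 * g 2 + 3 * g 1 - g 0 < 0) :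
    ¬ PBFullyInc 3 (fun α : Finset (Fin d) => g #α) := by
  intro hinc
  obtain ⟨β, -, hβ⟩ := exists_subset_card_eq (s := (univ : Finset (Fin d))) (by simpa using hd)
  have hdiff := hinc β (by omega) hβ.le ∅ (disjoint_empty_left β)
  rw [pbDiff_comp_card g (disjoint_empty_left β), hβ] at hdiff
  simp [sum_range_succ] at hdiff
  linarith

/-- Example 1: for `d ≥ 3`, the pseudo-Boolean function `f(α) = max(|α|, 1)` is fully
`2`-increasing but not fully `3`-increasing. -/
theorem card_vee_one_fully_two_not_three (d : ℕ) (hd : 3 ≤ d) :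
    PBFullyInc 2 (fun α : Finset (Fin d) => max (α.card : ℝ) 1) ∧
    ¬ PBFullyInc 3 (fun α : Finset (Fin d) => max (α.card : ℝ) 1) := by
  let g : ℕ → ℝ := fun n => max (n : ℝ) 1
  have hmono : Monotone g := fun m n hmn => max_le_max (by exact_mod_cast hmn) le_rfl
  have hconv : ∀ n, 2 * g (n + 1) ≤ g n + g (n + 2) := by
    intro n
    have hn : (0 : ℝ) ≤ n := n.cast_nonneg
    simp only [g, Nat.cast_add, Nat.cast_one, Nat.cast_ofNat]
    rw [max_eq_left (by linarith : (1 : ℝ) ≤ n + 1), max_eq_left (by linarith : (1 : ℝ) ≤ n + 2)]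
    linarith [le_max_left (n : ℝ) 1]
  have hthird : g 3 - 3 * g 2 + 3 * g 1 - g 0 < 0 := by norm_num [g]
  exact ⟨pbFullyInc_two_comp_card hmono hconv, not_pbFullyInc_three_comp_card hd hthird⟩
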